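/- arXiv:2307.08159 — 3 statements merged into one kernel-verified Lean document; each statement's English description precedes it below -/
import Mathlib

section
/- Suppose a query M on a finite universe X is not ε-LDP, i.e., there exists an output y with max_x Pr(y|x) > e^ε · min_x Pr(y|x), where min_x Pr(y|x) > 0 and max_x Pr(y|x) < 1. Then there exists a statement f: X → [0,1] and a prior distribution Q such that Q(f|y) > e^ε · Q(f); hence M cannot provide an ε-learning limit for all statements. -/
/-!
Put a prior on two points only: a point `a` where the likelihood is maximal, with small weight
`t`, and a point `b` where it is minimal, with weight `1 - t`. For the statement `f = 𝟙_{a}`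
the ratio of posterior to prior is `Pr a / Q(Pr)`, and as `t → 0` the normaliser `Q(Pr)` tends
to `Pr b`, so the ratio tends to `max Pr / min Pr > e^ε`. (If `a = b`, then `Q` is the point
mass at `a`, and the claim reduces to `e^ε < 1`.)
-/

open Real Finset Filter Topology

section

variable {X : Type*} [Fintype X] [DecidableEq X]

lemma sum_mul_pi_single_add_pi_single (g : X → ℝ) (a b : X) (s t : ℝ) :
    ∑ x, g x * (Pi.single a s + Pi.single b t : X → ℝ) x = s * g a + t * g b := by
  simp [mul_add, Finset.sum_add_distrib, Pi.single_apply, mul_comm]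

lemma mul_prior_lt_posterior_pi_single {Pr Q : X → ℝ} {c : ℝ} {a : X} (hQa : 0 < Q a)
    (hZ : 0 < ∑ x, Pr x * Q x) (h : c * ∑ x, Pr x * Q x < Pr a) :
    c * ∑ x, (Pi.single a 1 : X → ℝ) x * Q x <
      (∑ x, Pr x * (Pi.single a 1 : X → ℝ) x * Q x) / ∑ x, Pr x * Q x := by
  have hprior : ∑ x, (Pi.single a 1 : X → ℝ) x * Q x = Q a := by simp [Pi.single_apply]
  have hjoint : ∑ x, Pr x * (Pi.single a 1 : X → ℝ) x * Q x = Pr a * Q a := by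
    simp [Pi.single_apply]
  rw [hprior, hjoint, lt_div_iff₀ hZ]
  nlinarith

end

lemma exists_convex_comb_lt {p q r : ℝ} (hp : p < r) :
    ∃ t, 0 < t ∧ t < 1 ∧ t * q + (1 - t) * p < r := by
  have hlim : Tendsto (fun t : ℝ => t * q + (1 - t) * p) (𝓝[>] 0) (𝓝 p) := by
    have : Continuous (fun t : ℝ => t * q + (1 - t) * p) := by fun_prop
    simpa using this.continuousWithinAt.tendsto (x := 0) (s := Set.Ioi 0)
  obtain ⟨t, ht, hlt⟩ := (Eventually.and (Ioo_mem_nhdsGT zero_lt_one)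
    (hlim.eventually (gt_mem_nhds hp))).exists
  exact ⟨t, ht.1, ht.2, hlt⟩

theorem not_ldp_implies_no_learning_limit_general
    {X : Type*} [Fintype X] [Nonempty X]
    (Pr : X → ℝ)        -- likelihood x ↦ Pr(y|x) for the witnessing output y
    (ε : ℝ)
    (hPrmin : 0 < Finset.univ.inf' Finset.univ_nonempty Pr)
    (hnotLDP : Real.exp ε * Finset.univ.inf' Finset.univ_nonempty Pr <
      Finset.univ.sup' Finset.univ_nonempty Pr) :
    ∃ (f : X → ℝ) (Q : X → ℝ),
      (∀ x, 0 ≤ f x ∧ f x ≤ 1) ∧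
      (∀ x, 0 ≤ Q x) ∧ (∑ x, Q x = 1) ∧
      0 < ∑ x, Pr x * Q x ∧
      Real.exp ε * (∑ x, f x * Q x) <
        (∑ x, Pr x * f x * Q x) / (∑ x, Pr x * Q x) := by
  classical
  obtain ⟨a, -, ha⟩ := Finset.exists_mem_eq_sup' Finset.univ_nonempty Pr
  obtain ⟨b, -, hb⟩ := Finset.exists_mem_eq_inf' Finset.univ_nonempty Pr
  have hpos : ∀ x, 0 < Pr x := fun x => hPrmin.trans_le (Finset.inf'_le Pr (mem_univ x))
  have hb_lt : Pr b < Pr a / exp ε := by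
    rw [lt_div_iff₀' (exp_pos ε), ← ha, ← hb]; exact hnotLDP
  obtain ⟨t, ht0, ht1, hnorm⟩ := exists_convex_comb_lt (q := Pr a) hb_lt
  set Q : X → ℝ := Pi.single a t + Pi.single b (1 - t)
  have hsum : ∀ g : X → ℝ, ∑ x, g x * Q x = t * g a + (1 - t) * g b :=
    fun g => sum_mul_pi_single_add_pi_single g a b t (1 - t)
  have hZpos : 0 < ∑ x, Pr x * Q x := by
    rw [hsum]; nlinarith [hpos a, hpos b]
  have hQ_ge : ∀ x, t * (if x = a then 1 else 0) ≤ Q x := fun x => by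
    simp only [Q, Pi.add_apply, Pi.single_apply]; split_ifs <;> linarith
  refine ⟨Pi.single a 1, Q, fun x => ?_, fun x => ?_, ?_, hZpos, ?_⟩
  · rw [Pi.single_apply]; split_ifs <;> norm_num
  · exact le_trans (by positivity) (hQ_ge x)
  · simpa using hsum 1
  · refine mul_prior_lt_posterior_pi_single (ht0.trans_le (by simpa using hQ_ge a)) hZpos ?_
    rwa [hsum, ← lt_div_iff₀' (exp_pos ε)]

/-- if a query is not ε-LDP at output y, then there is a statement f
and a prior Q whose posterior exceeds `e^ε` times the prior, so the query cannot
provide an ε-learning limit for all statements. -/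
theorem not_ldp_implies_no_learning_limit
    {X : Type*} [Fintype X] [Nonempty X]
    (hcard : 2 ≤ Fintype.card X)
    (Pr : X → ℝ)        -- likelihood x ↦ Pr(y|x) for the witnessing output y
    (ε : ℝ)
    (hPrmin : 0 < Finset.univ.inf' Finset.univ_nonempty Pr)
    (hPrmax : Finset.univ.sup' Finset.univ_nonempty Pr < 1)
    (hnotLDP : Real.exp ε * Finset.univ.inf' Finset.univ_nonempty Pr <
      Finset.univ.sup' Finset.univ_nonempty Pr) :
    ∃ (f : X → ℝ) (Q : X → ℝ),
      (∀ x, 0 ≤ f x ∧ f x ≤ 1) ∧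
      (∀ x, 0 ≤ Q x) ∧ (∑ x, Q x = 1) ∧
      0 < ∑ x, Pr x * Q x ∧
      Real.exp ε * (∑ x, f x * Q x) <
        (∑ x, Pr x * f x * Q x) / (∑ x, Pr x * Q x) :=
  not_ldp_implies_no_learning_limit_general Pr ε hPrmin hnotLDP
end

section
/- For any δ > 0, any output y of a query M on finite universe X with p_min = min_x Pr(y|x) > 0 and p_max = max_x Pr(y|x), there exists a statement f and a prior Q such that Q(f|y)/Q(f) ≥ p_max/p_min − δ. Concretely, taking f to be the indicator of an argmax of Pr(y|·), and Q supported on that argmax with mass p and on an argmin with mass 1−p where p ≤ δ p_min² / ((p_max − p_min)(p_max − δ p_min)) (assuming p_max > δ p_min and p_max > p_min), the inequality holds. -/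
open Finset Filter Topology

/-!
Let `a` maximise and `b` minimise the likelihood, let `f` be the indicator of `a`, and let the
prior put mass `p` on `a` and `1 - p` on `b`. Then `Q(f|y)/Q(f) = Pr a / (p Pr a + (1 - p) Pr b)`,
also when `a = b`, and this tends to `Pr a / Pr b = p_max / p_min` as `p → 0⁺`.
-/

section TwoPointPrior

variable {X : Type*} [DecidableEq X]

def twoPointPrior (a b : X) (p : ℝ) (x : X) : ℝ :=
  (if x = a then p else 0) + (if x = b then 1 - p else 0)

variable {a b : X} {p : ℝ}

lemma sum_mul_twoPointPrior [Fintype X] (g : X → ℝ) (a b : X) (p : ℝ) :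
    ∑ x, g x * twoPointPrior a b p x = p * g a + (1 - p) * g b := by
  simp [twoPointPrior, mul_add, mul_ite, Finset.sum_add_distrib, mul_comm]

lemma sum_twoPointPrior [Fintype X] (a b : X) (p : ℝ) : ∑ x, twoPointPrior a b p x = 1 := by
  simpa using sum_mul_twoPointPrior 1 a b p

lemma twoPointPrior_nonneg (hp0 : 0 ≤ p) (hp1 : p ≤ 1) (x : X) : 0 ≤ twoPointPrior a b p x := by
  unfold twoPointPrior
  split_ifs <;> linarith

lemma twoPointPrior_left_pos (hp0 : 0 < p) : 0 < twoPointPrior a b p a := by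
  rw [twoPointPrior, if_pos rfl]
  split_ifs <;> linarith

lemma knowledgeGain_indicator [Fintype X] (Pr Q : X → ℝ) (a : X) (hQa : 0 < Q a) :
    ((∑ x, Pr x * (if x = a then 1 else 0) * Q x) / ∑ x, Pr x * Q x) /
        ∑ x, (if x = a then 1 else 0) * Q x =
      Pr a / ∑ x, Pr x * Q x := by
  simp only [mul_ite, ite_mul, mul_one, one_mul, mul_zero, zero_mul, Finset.sum_ite_eq',
    Finset.mem_univ, if_true]
  rw [div_right_comm, mul_div_cancel_right₀ _ hQa.ne']

end TwoPointPrior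

lemma exists_le_div_mix_of_pos {u v δ : ℝ} (hv : 0 < v) (hδ : 0 < δ) :
    ∃ p, 0 < p ∧ p ≤ 1 ∧ u / v - δ ≤ u / (p * u + (1 - p) * v) := by
  have hcont : ContinuousAt (fun p : ℝ => u / (p * u + (1 - p) * v)) 0 :=
    continuousAt_const.div (by fun_prop) (by simp [hv.ne'])
  have hlim : Tendsto (fun p : ℝ => u / (p * u + (1 - p) * v)) (𝓝[>] 0) (𝓝 (u / v)) := by
    simpa using hcont.tendsto.mono_left nhdsWithin_le_nhds
  obtain ⟨p, hclose, hp⟩ :=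
    ((hlim.eventually_const_lt (sub_lt_self _ hδ)).and (Ioo_mem_nhdsGT one_pos)).exists
  exact ⟨p, hp.1, hp.2.le, hclose.le⟩

theorem knowledge_gain_bound_tight_general
    {X : Type*} [Fintype X] [Nonempty X]
    (Pr : X → ℝ)        -- likelihood x ↦ Pr(y|x) for the output y
    (δ : ℝ) (hδ : 0 < δ)
    (hPr : ∀ x, 0 < Pr x ∧ Pr x ≤ 1) :
    ∃ (f : X → ℝ) (Q : X → ℝ),
      (∀ x, 0 ≤ f x ∧ f x ≤ 1) ∧
      (∀ x, 0 ≤ Q x) ∧ (∑ x, Q x = 1) ∧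
      0 < ∑ x, Pr x * Q x ∧
      0 < ∑ x, f x * Q x ∧
      (Finset.univ.sup' Finset.univ_nonempty Pr) /
          (Finset.univ.inf' Finset.univ_nonempty Pr) - δ ≤
        ((∑ x, Pr x * f x * Q x) / (∑ x, Pr x * Q x)) / (∑ x, f x * Q x) := by
  classical
  obtain ⟨a, -, hmax⟩ := Finset.exists_mem_eq_sup' Finset.univ_nonempty Pr
  obtain ⟨b, -, hmin⟩ := Finset.exists_mem_eq_inf' Finset.univ_nonempty Pr
  obtain ⟨p, hp0, hp1, hgain⟩ := exists_le_div_mix_of_pos (u := Pr a) (hPr b).1 hδ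
  have hQa : 0 < twoPointPrior a b p a := twoPointPrior_left_pos hp0
  have hevidence : ∑ x, Pr x * twoPointPrior a b p x = p * Pr a + (1 - p) * Pr b :=
    sum_mul_twoPointPrior Pr a b p
  refine ⟨fun x => if x = a then 1 else 0, twoPointPrior a b p,
    fun x => by dsimp only; split_ifs <;> norm_num, twoPointPrior_nonneg hp0.le hp1,
    sum_twoPointPrior a b p, ?_, by simpa using hQa, ?_⟩
  · rw [hevidence]
    exact add_pos_of_pos_of_nonneg (mul_pos hp0 (hPr a).1)
      (mul_nonneg (sub_nonneg.2 hp1) (hPr b).1.le)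
  · rw [hmax, hmin, knowledgeGain_indicator Pr _ a hQa, hevidence]
    exact hgain

/-- the upper bound `p_max / p_min` on knowledge gain is tight up to
any δ > 0: some statement f and prior Q achieve `Q(f|y)/Q(f) ≥ p_max/p_min − δ`. -/
theorem knowledge_gain_bound_tight
    {X : Type*} [Fintype X] [Nonempty X]
    (Pr : X → ℝ)        -- likelihood x ↦ Pr(y|x) for the output y
    (δ : ℝ) (hδ : 0 < δ)
    (hPr : ∀ x, 0 < Pr x ∧ Pr x ≤ 1)
    (hδsmall : δ < (Finset.univ.sup' Finset.univ_nonempty Pr) /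
      (Finset.univ.inf' Finset.univ_nonempty Pr)) :
    ∃ (f : X → ℝ) (Q : X → ℝ),
      (∀ x, 0 ≤ f x ∧ f x ≤ 1) ∧
      (∀ x, 0 ≤ Q x) ∧ (∑ x, Q x = 1) ∧
      0 < ∑ x, Pr x * Q x ∧
      0 < ∑ x, f x * Q x ∧
      (Finset.univ.sup' Finset.univ_nonempty Pr) /
          (Finset.univ.inf' Finset.univ_nonempty Pr) - δ ≤
        ((∑ x, Pr x * f x * Q x) / (∑ x, Pr x * Q x)) / (∑ x, f x * Q x) :=
  knowledge_gain_bound_tight_general Pr δ hδ hPr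
end

section
/- For a fully adaptive composition of queries M_1, ..., M_n with positive likelihoods, if at least two of the accepted queries (say the last two, with tight guarantees ε_{n-1}, ε_n) are privacy-loss compatible — i.e., there exist outputs y_{n-1}, y_n with L(y_{n-1}, y_n) < e^{ε_{n-1}+ε_n} — and the final realized privacy loss equals the budget, L(y_{≤n}) = e^{ε_g}, then Σ_{i=1}^n ε_i > ε_g, i.e., the efficiency K = (Σ_i ε_i)/ε_g exceeds 1. -/
open Real Finset

/-!
The privacy loss `L` is submultiplicative: the maximum over secrets of a product of likelihoods
is at most the product of the maxima, and its minimum at least the product of the minima. Hence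
`e^{ε_g} = L(y_{≤n}) ≤ L(y_{≤n-2}) · L(y_{n-1}, y_n)`, where the first factor is at most
`e^{ε_1 + ⋯ + ε_{n-2}}` by the LDP guarantees and the second is strictly below
`e^{ε_{n-1}+ε_n}` by compatibility.
-/

/-- The paper's `L(S)`, for `f x = Pr(S | x)`. -/
noncomputable def privacyLoss {X : Type*} (s : Finset X) (hs : s.Nonempty) (f : X → ℝ) : ℝ :=
  s.sup' hs f / s.inf' hs f

section PrivacyLoss

variable {X : Type*} {s : Finset X} (hs : s.Nonempty) {f g : X → ℝ}

lemma sup'_pos_of_pos (hf : ∀ x ∈ s, 0 < f x) : 0 < s.sup' hs f :=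
  (hf _ hs.choose_spec).trans_le (le_sup' f hs.choose_spec)

lemma privacyLoss_le_iff (hf : ∀ x ∈ s, 0 < f x) {c : ℝ} :
    privacyLoss s hs f ≤ c ↔ s.sup' hs f ≤ c * s.inf' hs f :=
  div_le_iff₀ ((lt_inf'_iff hs).2 hf)

lemma privacyLoss_nonneg (hf : ∀ x ∈ s, 0 < f x) : 0 ≤ privacyLoss s hs f :=
  div_nonneg (sup'_pos_of_pos hs hf).le ((lt_inf'_iff hs).2 hf).le

lemma privacyLoss_mul_le (hf : ∀ x ∈ s, 0 < f x) (hg : ∀ x ∈ s, 0 < g x) :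
    privacyLoss s hs (fun x => f x * g x) ≤ privacyLoss s hs f * privacyLoss s hs g := by
  have hf₀ : ∀ x ∈ s, 0 ≤ f x := fun x hx => (hf x hx).le
  have hg₀ : ∀ x ∈ s, 0 ≤ g x := fun x hx => (hg x hx).le
  rw [privacyLoss, privacyLoss, privacyLoss, ← mul_div_mul_comm]
  exact div_le_div₀ (mul_pos (sup'_pos_of_pos hs hf) (sup'_pos_of_pos hs hg)).le
    (sup'_mul_le_mul_sup'_of_nonneg hf₀ hg₀ hs)
    (mul_pos ((lt_inf'_iff hs).2 hf) ((lt_inf'_iff hs).2 hg))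
    (inf'_mul_le_mul_inf'_of_nonneg hf₀ hg₀ hs)

lemma privacyLoss_prod_le {ι : Type*} (t : Finset ι) {F : ι → X → ℝ}
    (hF : ∀ i ∈ t, ∀ x ∈ s, 0 < F i x) :
    privacyLoss s hs (fun x => ∏ i ∈ t, F i x) ≤ ∏ i ∈ t, privacyLoss s hs (F i) := by
  classical
  induction t using Finset.induction_on with
  | empty => simp [privacyLoss]
  | insert j t hj ih =>
    have hFt : ∀ x ∈ s, 0 < ∏ i ∈ t, F i x := fun x hx =>
      prod_pos fun i hi => hF i (mem_insert_of_mem hi) x hx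
    simp only [prod_insert hj]
    exact (privacyLoss_mul_le hs (hF j (mem_insert_self j t)) hFt).trans
      (mul_le_mul_of_nonneg_left (ih fun i hi => hF i (mem_insert_of_mem hi))
        (privacyLoss_nonneg hs (hF j (mem_insert_self j t))))

end PrivacyLoss

theorem bayesian_composition_efficiency_gt_one_general
    {X : Type*} [Fintype X] [Nonempty X] (n : ℕ)
    (P : Fin n → X → ℝ) (Pa Pb : X → ℝ)
    (ε : Fin n → ℝ) (εa εb εg : ℝ)
    (hpos : ∀ i x, 0 < P i x) (hpa : ∀ x, 0 < Pa x) (hpb : ∀ x, 0 < Pb x)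
    (hLDP : ∀ i, Finset.univ.sup' Finset.univ_nonempty (P i) ≤
      Real.exp (ε i) * Finset.univ.inf' Finset.univ_nonempty (P i))
    -- privacy-loss compactibility of the last two queries:
    (hcompact : (Finset.univ.sup' Finset.univ_nonempty (fun x => Pa x * Pb x)) /
      (Finset.univ.inf' Finset.univ_nonempty (fun x => Pa x * Pb x)) <
      Real.exp (εa + εb))
    -- the realized privacy loss of the whole composition equals the budget:
    (hfull : (Finset.univ.sup' Finset.univ_nonempty
        (fun x => (∏ i, P i x) * Pa x * Pb x)) /
      (Finset.univ.inf' Finset.univ_nonempty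
        (fun x => (∏ i, P i x) * Pa x * Pb x)) = Real.exp εg) :
    εg < (∑ i, ε i) + εa + εb := by
  have hPpos : ∀ i ∈ univ, ∀ x ∈ univ, 0 < P i x := fun i _ x _ => hpos i x
  have hPab : ∀ x ∈ univ, 0 < Pa x * Pb x := fun x _ => mul_pos (hpa x) (hpb x)
  have hloss_P : privacyLoss univ univ_nonempty (fun x => ∏ i, P i x) ≤ exp (∑ i, ε i) := by
    rw [exp_sum]
    exact (privacyLoss_prod_le univ_nonempty univ hPpos).trans <| prod_le_prod
      (fun i _ => privacyLoss_nonneg univ_nonempty (hPpos i (mem_univ i)))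
      (fun i _ => (privacyLoss_le_iff univ_nonempty (hPpos i (mem_univ i))).2 (hLDP i))
  have hsplit : exp εg =
      privacyLoss univ univ_nonempty (fun x => (∏ i, P i x) * (Pa x * Pb x)) := by
    simp only [← hfull, privacyLoss, mul_assoc]
  refine exp_lt_exp.1 <| calc
    exp εg ≤ privacyLoss univ univ_nonempty (fun x => ∏ i, P i x) *
        privacyLoss univ univ_nonempty (fun x => Pa x * Pb x) :=
      hsplit.trans_le <| privacyLoss_mul_le univ_nonempty
        (fun x _ => prod_pos fun i _ => hpos i x) hPab
    _ < exp (∑ i, ε i) * exp (εa + εb) :=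
      mul_lt_mul_of_le_of_lt_of_nonneg_of_pos hloss_P hcompact
        (privacyLoss_nonneg univ_nonempty hPab) (exp_pos _)
    _ = exp ((∑ i, ε i) + εa + εb) := by rw [add_assoc, ← exp_add]

/-- if the last two accepted queries of a Bayesian composition are
privacy-loss compactible and the realized privacy loss of the whole composition
equals the budget `e^{ε_g}`, then the sum of the individual DP guarantees
strictly exceeds `ε_g`, i.e. the efficiency `K > 1`.
The first `n` queries have likelihoods `P i` (for outputs `y_i`) and guarantees
`ε i`; the last two queries have likelihoods `Pa, Pb` and guarantees `εa, εb`. -/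
theorem bayesian_composition_efficiency_gt_one
    {X : Type*} [Fintype X] [Nonempty X] (n : ℕ)
    (P : Fin n → X → ℝ) (Pa Pb : X → ℝ)
    (ε : Fin n → ℝ) (εa εb εg : ℝ)
    (hpos : ∀ i x, 0 < P i x) (hpa : ∀ x, 0 < Pa x) (hpb : ∀ x, 0 < Pb x)
    (hLDP : ∀ i, Finset.univ.sup' Finset.univ_nonempty (P i) ≤
      Real.exp (ε i) * Finset.univ.inf' Finset.univ_nonempty (P i))
    (hLDPa : Finset.univ.sup' Finset.univ_nonempty Pa ≤
      Real.exp εa * Finset.univ.inf' Finset.univ_nonempty Pa)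
    (hLDPb : Finset.univ.sup' Finset.univ_nonempty Pb ≤
      Real.exp εb * Finset.univ.inf' Finset.univ_nonempty Pb)
    -- privacy-loss compactibility of the last two queries:
    (hcompact : (Finset.univ.sup' Finset.univ_nonempty (fun x => Pa x * Pb x)) /
      (Finset.univ.inf' Finset.univ_nonempty (fun x => Pa x * Pb x)) <
      Real.exp (εa + εb))
    -- the realized privacy loss of the whole composition equals the budget:
    (hfull : (Finset.univ.sup' Finset.univ_nonempty
        (fun x => (∏ i, P i x) * Pa x * Pb x)) /
      (Finset.univ.inf' Finset.univ_nonempty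
        (fun x => (∏ i, P i x) * Pa x * Pb x)) = Real.exp εg) :
    εg < (∑ i, ε i) + εa + εb :=
  bayesian_composition_efficiency_gt_one_general n P Pa Pb ε εa εb εg hpos hpa hpb hLDP hcompact
    hfull
end
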